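/- For every z₀ with 0 ≤ z₀ < 1, the integral √2 · ∫₀^{z₀} √(1+z²)/(1−z²) dz equals 2·artanh(√2·z₀/√(1+z₀²)) − √2·artanh(z₀/√(1+z₀²)). -/

import Mathlib

open Real

noncomputable def artanh (x : ℝ) : ℝ := (1 / 2) * Real.log ((1 + x) / (1 - x))

/-!
The right-hand side is an antiderivative of the integrand: for every constant `c`,
`d/dz artanh (c z / √(1 + z²)) = c / ((1 + (1 - c²) z²) √(1 + z²))`, and the cases `c = √2`
and `c = 1` combine to `√2 · √(1 + z²) / (1 - z²)`, since `2 - (1 - z²) = (√(1 + z²))²`.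
The identity is then the fundamental theorem of calculus on `[0, z₀]`, where `z² < 1`.
-/

lemma hasDerivAt_artanh {x : ℝ} (hx : x ^ 2 ≠ 1) :
    HasDerivAt _root_.artanh (1 / (1 - x ^ 2)) x := by
  have hsub : 1 - x ≠ 0 := fun h => hx (by rw [show x = 1 by linarith]; norm_num)
  have hadd : 1 + x ≠ 0 := fun h => hx (by rw [show x = -1 by linarith]; norm_num)
  have hquot : HasDerivAt (fun x : ℝ => (1 + x) / (1 - x)) (2 / (1 - x) ^ 2) x := by
    refine (((hasDerivAt_id' x).const_add 1).div
      ((hasDerivAt_id' x).const_sub 1) hsub).congr_deriv ?_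
    ring
  refine (((hasDerivAt_log (div_ne_zero hadd hsub)).comp x hquot).const_mul
    (1 / 2 : ℝ)).congr_deriv ?_
  field_simp
  ring

lemma hasDerivAt_mul_div_sqrt_one_add_sq (c z : ℝ) :
    HasDerivAt (fun z => c * z / √(1 + z ^ 2)) (c / ((1 + z ^ 2) * √(1 + z ^ 2))) z := by
  have hpos : 0 < 1 + z ^ 2 := by positivity
  have hsq : √(1 + z ^ 2) ^ 2 = 1 + z ^ 2 := sq_sqrt hpos.le
  have hsqrt : HasDerivAt (fun z => √(1 + z ^ 2)) (2 * z / (2 * √(1 + z ^ 2))) z :=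
    (((hasDerivAt_id z).pow 2).const_add 1).sqrt hpos.ne' |>.congr_deriv (by simp)
  refine (((hasDerivAt_id' z).const_mul c).div hsqrt (sqrt_pos.2 hpos).ne').congr_deriv ?_
  field_simp
  linear_combination c * z ^ 2 * hsq

lemma hasDerivAt_artanh_mul_div_sqrt_one_add_sq {c z : ℝ} (hz : (c ^ 2 - 1) * z ^ 2 ≠ 1) :
    HasDerivAt (fun z => _root_.artanh (c * z / √(1 + z ^ 2)))
      (c / ((1 + (1 - c ^ 2) * z ^ 2) * √(1 + z ^ 2))) z := by
  have hpos : 0 < 1 + z ^ 2 := by positivity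
  have hsq : √(1 + z ^ 2) ^ 2 = 1 + z ^ 2 := sq_sqrt hpos.le
  have harg : (c * z / √(1 + z ^ 2)) ^ 2 = c ^ 2 * z ^ 2 / (1 + z ^ 2) := by
    rw [div_pow, mul_pow, hsq]
  have hden : 1 + (1 - c ^ 2) * z ^ 2 ≠ 0 := fun h => hz (by linarith)
  have hne : (c * z / √(1 + z ^ 2)) ^ 2 ≠ 1 := by
    rw [harg, Ne, div_eq_one_iff_eq hpos.ne']
    exact fun h => hden (by linarith)
  refine ((hasDerivAt_artanh hne).comp z (hasDerivAt_mul_div_sqrt_one_add_sq c z)).congr_deriv ?_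
  rw [harg]
  field_simp
  ring

lemma hasDerivAt_arcLength_primitive {z : ℝ} (hz : z ^ 2 ≠ 1) :
    HasDerivAt
      (fun z => 2 * _root_.artanh (√2 * z / √(1 + z ^ 2)) - √2 * _root_.artanh (z / √(1 + z ^ 2)))
      (√2 * (√(1 + z ^ 2) / (1 - z ^ 2))) z := by
  have h2 : √2 ^ 2 = 2 := sq_sqrt zero_le_two
  have hsq : √(1 + z ^ 2) ^ 2 = 1 + z ^ 2 := sq_sqrt (by positivity)
  have hsqrt2 := hasDerivAt_artanh_mul_div_sqrt_one_add_sq (c := √2) (z := z)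
    (by rwa [h2, show (2 : ℝ) - 1 = 1 by norm_num, one_mul])
  have hone := hasDerivAt_artanh_mul_div_sqrt_one_add_sq (c := 1) (z := z) (by simp)
  simp only [one_mul, one_pow, sub_self, zero_mul, add_zero] at hone
  refine ((hsqrt2.const_mul 2).sub (hone.const_mul √2)).congr_deriv ?_
  rw [h2, show (1 : ℝ) + (1 - 2) * z ^ 2 = 1 - z ^ 2 by ring]
  field_simp
  linear_combination -hsq

/-- **Arc-length integral identity for the two-level reset map.**
For `0 ≤ z₀ < 1`,
`√2 ∫₀^{z₀} √(1+z²)/(1−z²) dz = 2 artanh(√2 z₀/√(1+z₀²)) − √2 artanh(z₀/√(1+z₀²))`. -/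
theorem arc_length_integral_identity (z₀ : ℝ) (h0 : 0 ≤ z₀) (h1 : z₀ < 1) :
    Real.sqrt 2 * ∫ z in (0:ℝ)..z₀, Real.sqrt (1 + z ^ 2) / (1 - z ^ 2) =
      2 * _root_.artanh (Real.sqrt 2 * z₀ / Real.sqrt (1 + z₀ ^ 2)) -
        Real.sqrt 2 * _root_.artanh (z₀ / Real.sqrt (1 + z₀ ^ 2)) := by
  have hsq_lt : ∀ z ∈ Set.uIcc 0 z₀, z ^ 2 < 1 := by
    intro z hz
    rw [Set.uIcc_of_le h0] at hz
    nlinarith [hz.1, hz.2]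
  rw [← intervalIntegral.integral_const_mul, intervalIntegral.integral_eq_sub_of_hasDerivAt
    (fun z hz => hasDerivAt_arcLength_primitive (hsq_lt z hz).ne)]
  · simp [_root_.artanh]
  · refine ContinuousOn.intervalIntegrable ?_
    exact continuousOn_const.mul <| ContinuousOn.div (by fun_prop) (by fun_prop)
      fun z hz => (sub_pos.2 (hsq_lt z hz)).ne'
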